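/- A MEM cannot start at position i+1 if P[i] = T[MS[i+1].pos − 1]: under this condition, MS[i].len = MS[i+1].len + 1, so MS[i].len > MS[i+1].len, violating the MEM starting condition MS[i].len ≤ MS[i+1].len. -/

import Mathlib

/-! Extending the match at `i + 1` one character to the left gives an occurrence in `T` of
`P[i..i + MS[i+1].len]`, so `MS[i].len ≥ MS[i+1].len + 1`. Conversely, dropping the first
character of the match at `i` gives an occurrence of `P[i+1..i + MS[i].len - 1]`, so
`MS[i+1].len ≥ MS[i].len - 1`. -/

namespace List

variable {α : Type*}

theorem take_drop_infix (l : List α) (k m : ℕ) : (l.drop k).take m <:+: l :=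
  (take_prefix _ _).isInfix.trans (drop_suffix _ _).isInfix

theorem take_pred_drop_succ_suffix (l : List α) (i n : ℕ) :
    (l.drop (i + 1)).take (n - 1) <:+ (l.drop i).take n := by
  rw [← drop_drop, ← drop_take]
  exact drop_suffix _ _

theorem take_succ_drop_eq_of_getElem?_eq {l l' : List α} {i j m : ℕ} (hi : i < l.length)
    (h : l'[j]? = l[i]?) (htake : (l'.drop (j + 1)).take m = (l.drop (i + 1)).take m) :
    (l'.drop j).take (m + 1) = (l.drop i).take (m + 1) := by
  have hj : j < l'.length := by
    by_contra hj
    simp [getElem?_eq_none (not_lt.mp hj), getElem?_eq_getElem hi] at h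
  have hhead : l'[j] = l[i] := by
    simpa [getElem?_eq_getElem hj, getElem?_eq_getElem hi] using h
  rw [drop_eq_getElem_cons hi, drop_eq_getElem_cons hj, take_succ_cons, take_succ_cons, hhead,
    htake]

end List

theorem no_mem_start_general {α : Type*} (P T : List α) (ms pos : ℕ → ℕ)
    (hms_le : ∀ i, ms i ≤ P.length - i)
    (hms_occ : ∀ i, ((P.drop i).take (ms i)) <:+: T)
    (hms_max : ∀ i l, l ≤ P.length - i → ((P.drop i).take l) <:+: T → l ≤ ms i)
    (hpos : ∀ i, (T.drop (pos i)).take (ms i) = (P.drop i).take (ms i))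
    (i : ℕ) (hi : i < P.length) (hp : 1 ≤ pos (i + 1))
    (hc : T[pos (i + 1) - 1]? = P[i]?) :
    ms i = ms (i + 1) + 1 ∧ ¬ (ms i ≤ ms (i + 1)) := by
  have hextend : (T.drop (pos (i + 1) - 1)).take (ms (i + 1) + 1) =
      (P.drop i).take (ms (i + 1) + 1) := by
    refine List.take_succ_drop_eq_of_getElem?_eq hi hc ?_
    rw [Nat.sub_add_cancel hp]
    exact hpos (i + 1)
  have hge : ms (i + 1) + 1 ≤ ms i := by
    refine hms_max i _ (by have := hms_le (i + 1); omega) ?_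
    rw [← hextend]
    exact List.take_drop_infix _ _ _
  have hle : ms i - 1 ≤ ms (i + 1) :=
    hms_max (i + 1) _ (by have := hms_le i; omega)
      ((List.take_pred_drop_succ_suffix P i (ms i)).isInfix.trans (hms_occ i))
  omega

/-- a MEM cannot start at position `i+1` when
`P[i] = T[MS[i+1].pos - 1]`: in that case `MS[i].len = MS[i+1].len + 1`, so the
MEM starting condition `MS[i].len ≤ MS[i+1].len` fails. Here `pos` and `ms` are
the matching statistics of `P` with respect to `T`. -/
theorem no_mem_start {α : Type*} [DecidableEq α] (P T : List α) (ms pos : ℕ → ℕ)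
    (hms_le : ∀ i, ms i ≤ P.length - i)
    (hms_occ : ∀ i, ((P.drop i).take (ms i)) <:+: T)
    (hms_max : ∀ i l, l ≤ P.length - i → ((P.drop i).take l) <:+: T → l ≤ ms i)
    (hpos_len : ∀ i, ms i ≤ T.length - pos i)
    (hpos : ∀ i, (T.drop (pos i)).take (ms i) = (P.drop i).take (ms i))
    (i : ℕ) (hi : i < P.length) (hp : 1 ≤ pos (i + 1))
    (hc : T[pos (i + 1) - 1]? = P[i]?) :
    ms i = ms (i + 1) + 1 ∧ ¬ (ms i ≤ ms (i + 1)) :=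
  no_mem_start_general P T ms pos hms_le hms_occ hms_max hpos i hi hp hc
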